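/- There exists a unit-distance graph in the plane with exactly 7 vertices whose chromatic number equals 4 (the Moser spindle), so v_4 ≤ 7. -/

import Mathlib

noncomputable def pt (x y : ℝ) : EuclideanSpace ℝ (Fin 2) := WithLp.toLp 2 ![x, y]

lemma pt_dist (a b c d : ℝ) (h : (a - c)^2 + (b - d)^2 = 1) : dist (pt a b) (pt c d) = 1 := by
  rw [EuclideanSpace.dist_eq, Fin.sum_univ_two]
  simp only [pt, PiLp.toLp_apply, Matrix.cons_val_zero, Matrix.cons_val_one, Matrix.head_cons]
  rw [show ((1:ℝ)) = Real.sqrt 1 from (Real.sqrt_one).symm]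
  congr 1
  rw [Real.dist_eq, Real.dist_eq, sq_abs, sq_abs]
  exact h

lemma pt_eq_iff (a b c d : ℝ) : pt a b = pt c d ↔ a = c ∧ b = d := by
  constructor
  · intro h
    exact ⟨by simpa [pt] using congrArg (fun v => v 0) h, by simpa [pt] using congrArg (fun v => v 1) h⟩
  · rintro ⟨rfl, rfl⟩; rfl

def spindle : SimpleGraph (Fin 7) := SimpleGraph.fromRel (fun i j =>
  (i,j) ∈ [(0,1),(0,2),(1,2),(1,3),(2,3),(0,4),(0,5),(4,5),(4,6),(5,6),(3,6)])

instance : DecidableRel spindle.Adj := fun i j => by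
  unfold spindle; rw [SimpleGraph.fromRel_adj]; infer_instance

lemma spindle_col4 : spindle.Colorable 4 :=
  ⟨SimpleGraph.Coloring.mk (![0,1,2,3,1,2,0] : Fin 7 → Fin 4) (by decide)⟩

set_option maxRecDepth 20000 in
set_option synthInstance.maxHeartbeats 1000000 in
set_option synthInstance.maxSize 2000 in
lemma key3 : ∀ a b c d e p q : Fin 3, ¬(a ≠ b ∧ a ≠ c ∧ b ≠ c ∧ b ≠ d ∧
    c ≠ d ∧ a ≠ p ∧ a ≠ q ∧ p ≠ q ∧ p ≠ e ∧ q ≠ e ∧ d ≠ e) := by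
  decide

lemma spindle_not3 : ¬ spindle.Colorable 3 := by
  rintro ⟨C⟩
  exact key3 (C 0) (C 1) (C 2) (C 3) (C 6) (C 4) (C 5)
    ⟨C.valid (by decide), C.valid (by decide), C.valid (by decide),
    C.valid (by decide), C.valid (by decide), C.valid (by decide), C.valid (by decide),
    C.valid (by decide), C.valid (by decide), C.valid (by decide), C.valid (by decide)⟩

noncomputable def mos : Fin 7 → EuclideanSpace ℝ (Fin 2)
  | 0 => pt 0 0
  | 1 => pt 1 0
  | 2 => pt (1/2) (Real.sqrt 3/2)
  | 3 => pt (3/2) (Real.sqrt 3/2)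
  | 4 => pt (5/6) (Real.sqrt 11/6)
  | 5 => pt ((5 - Real.sqrt 3*Real.sqrt 11)/12) ((Real.sqrt 11 + 5*Real.sqrt 3)/12)
  | 6 => pt ((15 - Real.sqrt 3*Real.sqrt 11)/12) ((3*Real.sqrt 11 + 5*Real.sqrt 3)/12)

set_option maxHeartbeats 2000000 in
lemma mos_dist : ∀ i j, spindle.Adj i j → dist (mos i) (mos j) = 1 := by
  have h3 : (Real.sqrt 3)^2 = 3 := Real.sq_sqrt (by norm_num)
  have h11 : (Real.sqrt 11)^2 = 11 := Real.sq_sqrt (by norm_num)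
  set s3 := Real.sqrt 3
  set s11 := Real.sqrt 11
  have e01 : dist (mos 0) (mos 1) = 1 := pt_dist _ _ _ _ (by norm_num)
  have e02 : dist (mos 0) (mos 2) = 1 := pt_dist _ _ _ _ (by linear_combination (1/4) * h3)
  have e12 : dist (mos 1) (mos 2) = 1 := pt_dist _ _ _ _ (by linear_combination (1/4) * h3)
  have e13 : dist (mos 1) (mos 3) = 1 := pt_dist _ _ _ _ (by linear_combination (1/4) * h3)
  have e23 : dist (mos 2) (mos 3) = 1 := pt_dist _ _ _ _ (by norm_num)
  have e04 : dist (mos 0) (mos 4) = 1 := pt_dist _ _ _ _ (by linear_combination (1/36) * h11)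
  have e05 : dist (mos 0) (mos 5) = 1 := pt_dist _ _ _ _
    (by linear_combination ((s11^2+25)/144) * h3 + (4/144) * h11)
  have e45 : dist (mos 4) (mos 5) = 1 := pt_dist _ _ _ _
    (by linear_combination ((s11^2+25)/144) * h3 + (4/144) * h11)
  have e46 : dist (mos 4) (mos 6) = 1 := pt_dist _ _ _ _
    (by linear_combination ((s11^2+25)/144) * h3 + (4/144) * h11)
  have e56 : dist (mos 5) (mos 6) = 1 := pt_dist _ _ _ _
    (by linear_combination (4/144) * h11)
  have e36 : dist (mos 3) (mos 6) = 1 := pt_dist _ _ _ _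
    (by linear_combination ((s11^2+1)/144) * h3 + (12/144) * h11)
  intro i j hadj
  fin_cases i <;> fin_cases j <;>
    first
      | exact absurd hadj (by decide)
      | assumption
      | (rw [dist_comm]; assumption)

set_option maxHeartbeats 2000000 in
lemma mos_inj : Function.Injective mos := by
  have h3 : (Real.sqrt 3)^2 = 3 := Real.sq_sqrt (by norm_num)
  have h11 : (Real.sqrt 11)^2 = 11 := Real.sq_sqrt (by norm_num)
  have hs3 : 1 < Real.sqrt 3 := by nlinarith [Real.sqrt_nonneg 3, h3]
  have hs11 : 3 < Real.sqrt 11 := by nlinarith [Real.sqrt_nonneg 11, h11]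
  have hs3' : Real.sqrt 3 < 2 := by nlinarith [Real.sqrt_nonneg 3, h3]
  have hs11' : Real.sqrt 11 < 4 := by nlinarith [Real.sqrt_nonneg 11, h11]
  have n01 : mos 0 ≠ mos 1 := fun h => by
    obtain ⟨h1, h2⟩ := (pt_eq_iff _ _ _ _).mp h; nlinarith [h3, h11, hs3, hs11, hs3', hs11']
  have n02 : mos 0 ≠ mos 2 := fun h => by
    obtain ⟨h1, h2⟩ := (pt_eq_iff _ _ _ _).mp h; nlinarith [h3, h11, hs3, hs11, hs3', hs11']
  have n03 : mos 0 ≠ mos 3 := fun h => by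
    obtain ⟨h1, h2⟩ := (pt_eq_iff _ _ _ _).mp h; nlinarith [h3, h11, hs3, hs11, hs3', hs11']
  have n04 : mos 0 ≠ mos 4 := fun h => by
    obtain ⟨h1, h2⟩ := (pt_eq_iff _ _ _ _).mp h; nlinarith [h3, h11, hs3, hs11, hs3', hs11']
  have n05 : mos 0 ≠ mos 5 := fun h => by
    obtain ⟨h1, h2⟩ := (pt_eq_iff _ _ _ _).mp h; nlinarith [h3, h11, hs3, hs11, hs3', hs11']
  have n06 : mos 0 ≠ mos 6 := fun h => by
    obtain ⟨h1, h2⟩ := (pt_eq_iff _ _ _ _).mp h; nlinarith [h3, h11, hs3, hs11, hs3', hs11']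
  have n12 : mos 1 ≠ mos 2 := fun h => by
    obtain ⟨h1, h2⟩ := (pt_eq_iff _ _ _ _).mp h; nlinarith [h3, h11, hs3, hs11, hs3', hs11']
  have n13 : mos 1 ≠ mos 3 := fun h => by
    obtain ⟨h1, h2⟩ := (pt_eq_iff _ _ _ _).mp h; nlinarith [h3, h11, hs3, hs11, hs3', hs11']
  have n14 : mos 1 ≠ mos 4 := fun h => by
    obtain ⟨h1, h2⟩ := (pt_eq_iff _ _ _ _).mp h; nlinarith [h3, h11, hs3, hs11, hs3', hs11']
  have n15 : mos 1 ≠ mos 5 := fun h => by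
    obtain ⟨h1, h2⟩ := (pt_eq_iff _ _ _ _).mp h; nlinarith [h3, h11, hs3, hs11, hs3', hs11']
  have n16 : mos 1 ≠ mos 6 := fun h => by
    obtain ⟨h1, h2⟩ := (pt_eq_iff _ _ _ _).mp h; nlinarith [h3, h11, hs3, hs11, hs3', hs11']
  have n23 : mos 2 ≠ mos 3 := fun h => by
    obtain ⟨h1, h2⟩ := (pt_eq_iff _ _ _ _).mp h; nlinarith [h3, h11, hs3, hs11, hs3', hs11']
  have n24 : mos 2 ≠ mos 4 := fun h => by
    obtain ⟨h1, h2⟩ := (pt_eq_iff _ _ _ _).mp h; nlinarith [h3, h11, hs3, hs11, hs3', hs11']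
  have n25 : mos 2 ≠ mos 5 := fun h => by
    obtain ⟨h1, h2⟩ := (pt_eq_iff _ _ _ _).mp h; nlinarith [h3, h11, hs3, hs11, hs3', hs11']
  have n26 : mos 2 ≠ mos 6 := fun h => by
    obtain ⟨h1, h2⟩ := (pt_eq_iff _ _ _ _).mp h; nlinarith [h3, h11, hs3, hs11, hs3', hs11']
  have n34 : mos 3 ≠ mos 4 := fun h => by
    obtain ⟨h1, h2⟩ := (pt_eq_iff _ _ _ _).mp h; nlinarith [h3, h11, hs3, hs11, hs3', hs11']
  have n35 : mos 3 ≠ mos 5 := fun h => by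
    obtain ⟨h1, h2⟩ := (pt_eq_iff _ _ _ _).mp h; nlinarith [h3, h11, hs3, hs11, hs3', hs11']
  have n36 : mos 3 ≠ mos 6 := fun h => by
    obtain ⟨h1, h2⟩ := (pt_eq_iff _ _ _ _).mp h; nlinarith [h3, h11, hs3, hs11, hs3', hs11']
  have n45 : mos 4 ≠ mos 5 := fun h => by
    obtain ⟨h1, h2⟩ := (pt_eq_iff _ _ _ _).mp h; nlinarith [h3, h11, hs3, hs11, hs3', hs11']
  have n46 : mos 4 ≠ mos 6 := fun h => by
    obtain ⟨h1, h2⟩ := (pt_eq_iff _ _ _ _).mp h; nlinarith [h3, h11, hs3, hs11, hs3', hs11']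
  have n56 : mos 5 ≠ mos 6 := fun h => by
    obtain ⟨h1, h2⟩ := (pt_eq_iff _ _ _ _).mp h; nlinarith [h3, h11, hs3, hs11, hs3', hs11']
  intro i j hij
  fin_cases i <;> fin_cases j <;>
    first
      | rfl
      | exact absurd hij n01
      | exact absurd hij n02
      | exact absurd hij n03
      | exact absurd hij n04
      | exact absurd hij n05
      | exact absurd hij n06
      | exact absurd hij n12
      | exact absurd hij n13
      | exact absurd hij n14
      | exact absurd hij n15
      | exact absurd hij n16
      | exact absurd hij n23
      | exact absurd hij n24
      | exact absurd hij n25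
      | exact absurd hij n26
      | exact absurd hij n34
      | exact absurd hij n35
      | exact absurd hij n36
      | exact absurd hij n45
      | exact absurd hij n46
      | exact absurd hij n56
      | exact absurd hij n01.symm
      | exact absurd hij n02.symm
      | exact absurd hij n03.symm
      | exact absurd hij n04.symm
      | exact absurd hij n05.symm
      | exact absurd hij n06.symm
      | exact absurd hij n12.symm
      | exact absurd hij n13.symm
      | exact absurd hij n14.symm
      | exact absurd hij n15.symm
      | exact absurd hij n16.symm
      | exact absurd hij n23.symm
      | exact absurd hij n24.symm
      | exact absurd hij n25.symm
      | exact absurd hij n26.symm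
      | exact absurd hij n34.symm
      | exact absurd hij n35.symm
      | exact absurd hij n36.symm
      | exact absurd hij n45.symm
      | exact absurd hij n46.symm
      | exact absurd hij n56.symm

/-- There exists a unit-distance graph in the plane with exactly 7 vertices
whose chromatic number equals 4 (the Moser spindle), so v₄ ≤ 7. -/
theorem v4_le_7 :
    ∃ (P : Finset (EuclideanSpace ℝ (Fin 2))) (G : SimpleGraph P),
      (∀ x y : P, G.Adj x y → dist (x : EuclideanSpace ℝ (Fin 2)) y = 1) ∧
      P.card = 7 ∧ G.chromaticNumber = 4 := by
  classical
  set P : Finset (EuclideanSpace ℝ (Fin 2)) := Finset.image mos Finset.univ with hP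
  have hg : ∀ i : Fin 7, mos i ∈ P := fun i => Finset.mem_image_of_mem mos (Finset.mem_univ i)
  set g : Fin 7 → P := fun i => ⟨mos i, hg i⟩ with hgdef
  have hbij : Function.Bijective g := by
    constructor
    · intro i j h
      exact mos_inj (congrArg Subtype.val h)
    · rintro ⟨x, hx⟩
      obtain ⟨i, -, rfl⟩ := Finset.mem_image.mp hx
      exact ⟨i, rfl⟩
  set e : Fin 7 ≃ P := Equiv.ofBijective g hbij with he
  refine ⟨P, SimpleGraph.comap (fun p => e.symm p) spindle, ?_, ?_, ?_⟩
  · intro x y hxy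
    have hx : (x : EuclideanSpace ℝ (Fin 2)) = mos (e.symm x) := by
      conv_lhs => rw [← e.apply_symm_apply x]
      rfl
    have hy : (y : EuclideanSpace ℝ (Fin 2)) = mos (e.symm y) := by
      conv_lhs => rw [← e.apply_symm_apply y]
      rfl
    rw [hx, hy]
    exact mos_dist _ _ hxy
  · rw [hP, Finset.card_image_of_injective _ mos_inj, Finset.card_univ, Fintype.card_fin]
  · have iso : (SimpleGraph.comap (fun p => e.symm p) spindle) ≃g spindle :=
      { toEquiv := e.symm, map_rel_iff' := Iff.rfl }
    have c4 : (SimpleGraph.comap (fun p => e.symm p) spindle).Colorable 4 :=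
      spindle_col4.of_hom iso.toHom
    have nc3 : ¬ (SimpleGraph.comap (fun p => e.symm p) spindle).Colorable 3 := fun h =>
      spindle_not3 (h.of_hom iso.symm.toHom)
    have hle : (SimpleGraph.comap (fun p => e.symm p) spindle).chromaticNumber ≤ 4 := by
      simpa using c4.chromaticNumber_le
    have hge : 4 ≤ (SimpleGraph.comap (fun p => e.symm p) spindle).chromaticNumber := by
      have h3 : ¬ ((SimpleGraph.comap (fun p => e.symm p) spindle).chromaticNumber ≤ 3) := by
        intro h
        exact nc3 (SimpleGraph.chromaticNumber_le_iff_colorable.mp (by simpa using h))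
      have := (ENat.add_one_le_iff (by simp : (3 : ℕ∞) ≠ ⊤)).mpr (not_le.mp h3)
      exact le_of_eq_of_le (by norm_num) this
    exact le_antisymm hle hge
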